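/- arXiv:2203.06417 — 2 statements merged into one kernel-verified Lean document; each statement's English description precedes it below -/
import Mathlib

section
/- Let h_n = |OCI_n| be the number of order-preserving partial injective contractions of X_n = {1,…,n}. Then h_0 = 1, h_1 = 2, h_2 = 6, h_3 = 18, and for all n ≥ 4, h_n + 11·h_{n−2} + h_{n−4} = 6·h_{n−1} + 6·h_{n−3} (i.e., h_n = 6h_{n−1} − 11h_{n−2} + 6h_{n−3} − h_{n−4}). -/
/-- `f` is a partial injective transformation (injectivity on its domain). -/
def PInj {n : ℕ} (f : Fin n → Option (Fin n)) : Prop :=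
  ∀ x y a, f x = some a → f y = some a → x = y

/-- `f` is a contraction: `|xα - yα| ≤ |x - y|` for all `x, y` in the domain. -/
def Contr {n : ℕ} (f : Fin n → Option (Fin n)) : Prop :=
  ∀ x y a b, f x = some a → f y = some b →
    |(a.val : ℤ) - (b.val : ℤ)| ≤ |(x.val : ℤ) - (y.val : ℤ)|

/-- `f` is order-preserving on its domain. -/
def OrdPres {n : ℕ} (f : Fin n → Option (Fin n)) : Prop :=
  ∀ x y a b, f x = some a → f y = some b → x ≤ y → a ≤ b

/-- `f` is order-reversing on its domain. -/
def OrdRev {n : ℕ} (f : Fin n → Option (Fin n)) : Prop :=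
  ∀ x y a b, f x = some a → f y = some b → x ≤ y → b ≤ a

/-- `f` is order-decreasing on its domain. -/
def OrdDecr {n : ℕ} (f : Fin n → Option (Fin n)) : Prop :=
  ∀ x a, f x = some a → a ≤ x

/-- The image set of the partial map `f`. -/
def pim {n : ℕ} (f : Fin n → Option (Fin n)) : Finset (Fin n) :=
  Finset.univ.filter (fun b => ∃ x, f x = some b)

/-- The domain set of the partial map `f`. -/
def pdom {n : ℕ} (f : Fin n → Option (Fin n)) : Finset (Fin n) :=
  Finset.univ.filter (fun x => (f x).isSome)

/-- The height (rank) of the partial map `f`: the size of its image. -/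
def pheight {n : ℕ} (f : Fin n → Option (Fin n)) : ℕ := (pim f).card

/-- The number of fixed points of the partial map `f`. -/
def pfix {n : ℕ} (f : Fin n → Option (Fin n)) : ℕ :=
  (Finset.univ.filter (fun x => f x = some x)).card

/-!
The graph of an order-preserving partial injective contraction is a chain for `Step`, where
`Step (x, a) (y, b)` means `a < b ∧ b - a ≤ y - x`, and every such chain in `[0, n)²` is a graph;
so `h n` counts `Step`-chains in `[0, n)²`. Splitting off the last point,
`h n = 1 + ∑_{d, e < n} N (d, e)`, where `N q` counts the chains below `q`. The predecessors of
`(d + 1, e)` that are not predecessors of `(d, e)` lie on one diagonal, which gives the Pascal-type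
rule `N (d + 2, e + 1) + N (d, e) = 2 N (d + 1, e) + N (d + 1, e + 1)`; a vertical translation shows
`N (d, e) = N (d, d)` for `d ≤ e`. Summing the Pascal rule along the hook `[0, n + 1)² \ [0, n)²`
yields `h (n + 2) - 3 h (n + 1) + h n = N (n, n)`, while the diagonal itself satisfies
`N (n + 2, n + 2) - 3 N (n + 1, n + 1) + N (n, n) = 0`. Hence `h` is annihilated by
`(E² - 3E + 1)² = E⁴ - 6E³ + 11E² - 6E + 1`.
-/

open Finset

namespace OCI

def Step (p q : ℕ × ℕ) : Prop := p.2 < q.2 ∧ q.2 + p.1 ≤ p.2 + q.1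

instance : DecidableRel Step := fun _ _ => inferInstanceAs (Decidable (_ ∧ _))

lemma Step.fst_lt {p q : ℕ × ℕ} (h : Step p q) : p.1 < q.1 := by
  obtain ⟨h₁, h₂⟩ := h
  omega

lemma Step.trans {p q r : ℕ × ℕ} (hpq : Step p q) (hqr : Step q r) : Step p r :=
  ⟨hpq.1.trans hqr.1, by obtain ⟨-, h₁⟩ := hpq; obtain ⟨-, h₂⟩ := hqr; omega⟩

lemma Step.irrefl (p : ℕ × ℕ) : ¬ Step p p := fun h => h.1.false

lemma eq_of_fst_eq_of_isChain {s : Set (ℕ × ℕ)} (hs : IsChain Step s) {p q : ℕ × ℕ}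
    (hp : p ∈ s) (hq : q ∈ s) (h : p.1 = q.1) : p = q := by
  by_contra hne
  rcases hs hp hq hne with hpq | hqp
  · exact hpq.fst_lt.ne h
  · exact hqp.fst_lt.ne h.symm

open Classical in
noncomputable def chainsIn (R : Finset (ℕ × ℕ)) : Finset (Finset (ℕ × ℕ)) :=
  R.powerset.filter fun S => IsChain Step (S : Set (ℕ × ℕ))

@[simp] lemma mem_chainsIn {R S : Finset (ℕ × ℕ)} :
    S ∈ chainsIn R ↔ S ⊆ R ∧ IsChain Step (S : Set (ℕ × ℕ)) := by
  simp [chainsIn]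

def preds (q : ℕ × ℕ) : Finset (ℕ × ℕ) := (range q.1 ×ˢ range q.2).filter (Step · q)

@[simp] lemma mem_preds {p q : ℕ × ℕ} : p ∈ preds q ↔ Step p q := by
  simp only [preds, mem_filter, mem_product, mem_range, and_iff_right_iff_imp]
  exact fun h => ⟨h.fst_lt, h.1⟩

noncomputable def numChainsBelow (q : ℕ × ℕ) : ℕ := #(chainsIn (preds q))

noncomputable def numChainsBox (n : ℕ) : ℕ := #(chainsIn (range n ×ˢ range n))

section ChainDecomposition

variable {R T T' : Finset (ℕ × ℕ)} {q q' : ℕ × ℕ}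

lemma notMem_of_subset_preds (hT : T ⊆ preds q) : q ∉ T :=
  fun hq => Step.irrefl q (mem_preds.1 (hT hq))

lemma eq_of_insert_eq_insert (hT : T ⊆ preds q) (hT' : T' ⊆ preds q')
    (h : insert q T = insert q' T') : q = q' := by
  by_contra hne
  have h₁ : q ∈ T' := (mem_insert.1 (h ▸ mem_insert_self q T)).resolve_left hne
  have h₂ : q' ∈ T := (mem_insert.1 (h.symm ▸ mem_insert_self q' T')).resolve_left (Ne.symm hne)
  exact Step.irrefl q ((mem_preds.1 (hT' h₁)).trans (mem_preds.1 (hT h₂)))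

lemma chainsIn_eq_insert_biUnion (hR : ∀ q ∈ R, ∀ p, Step p q → p ∈ R) :
    chainsIn R = insert ∅ (R.biUnion fun q => (chainsIn (preds q)).image (insert q)) := by
  ext S
  simp only [mem_chainsIn, mem_insert, mem_biUnion, mem_image]
  constructor
  · rintro ⟨hSR, hS⟩
    obtain rfl | hne := S.eq_empty_or_nonempty
    · exact .inl rfl
    obtain ⟨q, hq, hmax⟩ := S.exists_max_image Prod.fst hne
    refine .inr ⟨q, hSR hq, S.erase q, ⟨fun p hp => ?_, hS.mono (by simp)⟩, insert_erase hq⟩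
    obtain ⟨hpq, hp⟩ := mem_erase.1 hp
    refine mem_preds.2 ((hS hp hq hpq).resolve_right fun h => ?_)
    exact (hmax p hp).not_gt h.fst_lt
  · rintro (rfl | ⟨q, hq, T, ⟨hTq, hT⟩, rfl⟩)
    · simp
    refine ⟨insert_subset hq fun p hp => hR q hq p (mem_preds.1 (hTq hp)), ?_⟩
    rw [coe_insert]
    exact hT.insert fun p hp _ => .inr (mem_preds.1 (hTq hp))

theorem card_chainsIn (hR : ∀ q ∈ R, ∀ p, Step p q → p ∈ R) :
    #(chainsIn R) = 1 + ∑ q ∈ R, numChainsBelow q := by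
  rw [chainsIn_eq_insert_biUnion hR, card_insert_of_notMem, card_biUnion, add_comm]
  · refine congrArg (1 + ·) (sum_congr rfl fun q _ => ?_)
    refine card_image_of_injOn fun T hT T' hT' h => ?_
    rw [← erase_insert (notMem_of_subset_preds (mem_chainsIn.1 hT).1),
      ← erase_insert (notMem_of_subset_preds (mem_chainsIn.1 hT').1)]
    exact congrArg (·.erase q) h
  · intro q _ q' _ hne
    refine disjoint_left.2 fun S hS hS' => hne ?_
    obtain ⟨T, hT, rfl⟩ := mem_image.1 hS
    obtain ⟨T', hT', hTT'⟩ := mem_image.1 hS'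
    exact eq_of_insert_eq_insert (mem_chainsIn.1 hT).1 (mem_chainsIn.1 hT').1 hTT'.symm
  · simp

lemma numChainsBelow_eq (q : ℕ × ℕ) : numChainsBelow q = 1 + ∑ p ∈ preds q, numChainsBelow p :=
  card_chainsIn fun _ hr _ hp => mem_preds.2 (hp.trans (mem_preds.1 hr))

lemma numChainsBox_eq (n : ℕ) :
    numChainsBox n = 1 + ∑ d ∈ range n, ∑ e ∈ range n, numChainsBelow (d, e) := by
  rw [numChainsBox, card_chainsIn, sum_product]
  intro q hq p hp
  simp only [mem_product, mem_range] at hq ⊢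
  exact ⟨hp.fst_lt.trans hq.1, hp.1.trans hq.2⟩

end ChainDecomposition

def translate (v : ℕ × ℕ) : Step ↪r Step where
  toFun p := p + v
  inj' := add_left_injective v
  map_rel_iff' := by
    intro p q
    simp only [Function.Embedding.coeFn_mk, Step, Prod.fst_add, Prod.snd_add]
    omega

@[simp] lemma translate_apply (v p : ℕ × ℕ) : translate v p = p + v := rfl

lemma chainsIn_map (φ : Step ↪r Step) (R : Finset (ℕ × ℕ)) :
    chainsIn (R.map φ.toEmbedding) =
      (chainsIn R).map (mapEmbedding φ.toEmbedding).toEmbedding := by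
  ext S
  simp only [mem_chainsIn, mem_map, subset_map_iff]
  constructor
  · rintro ⟨⟨T, hTR, rfl⟩, hS⟩
    refine ⟨T, ⟨hTR, ?_⟩, rfl⟩
    rwa [coe_map, RelEmbedding.coe_toEmbedding, IsChain.image_relEmbedding_iff] at hS
  · rintro ⟨T, ⟨hTR, hT⟩, rfl⟩
    exact ⟨⟨T, hTR, rfl⟩, by simpa [coe_map] using hT.image φ⟩

lemma card_chainsIn_map (φ : Step ↪r Step) (R : Finset (ℕ × ℕ)) :
    #(chainsIn (R.map φ.toEmbedding)) = #(chainsIn R) := by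
  rw [chainsIn_map, card_map]

section Graph

variable {n : ℕ}

def graph (f : Fin n → Option (Fin n)) : Finset (ℕ × ℕ) :=
  (univ.filter fun p : Fin n × Fin n => f p.1 = some p.2).image fun p => ((p.1 : ℕ), (p.2 : ℕ))

lemma mem_graph {f : Fin n → Option (Fin n)} {p : ℕ × ℕ} :
    p ∈ graph f ↔ ∃ x a, f x = some a ∧ ((x : ℕ), (a : ℕ)) = p := by
  simp [graph]

lemma mk_mem_graph {f : Fin n → Option (Fin n)} {x a : Fin n} :
    ((x : ℕ), (a : ℕ)) ∈ graph f ↔ f x = some a := by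
  simp [graph, Fin.val_inj]

lemma graph_subset (f : Fin n → Option (Fin n)) : graph f ⊆ range n ×ˢ range n := by
  intro p hp
  obtain ⟨x, a, -, rfl⟩ := mem_graph.1 hp
  simp

lemma graph_injective : Function.Injective (graph (n := n)) := fun f g h =>
  funext fun x => Option.ext fun a => by rw [← mk_mem_graph, ← mk_mem_graph, h]

lemma step_mk_iff {x y a b : ℕ} (hxy : x < y) :
    Step (x, a) (y, b) ↔ a < b ∧ |(a : ℤ) - b| ≤ |(x : ℤ) - y| := by
  simp only [Step, abs_eq_max_neg]
  omega

lemma isOCI_iff_forall_step (f : Fin n → Option (Fin n)) :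
    PInj f ∧ Contr f ∧ OrdPres f ↔
      ∀ x y a b, f x = some a → f y = some b → x < y → Step (x, a) (y, b) := by
  constructor
  · rintro ⟨hinj, hcontr, hord⟩ x y a b ha hb hxy
    have hab : a ≠ b := fun h => hxy.ne (hinj x y a ha (h ▸ hb))
    exact (step_mk_iff hxy).2 ⟨Fin.lt_def.1 (lt_of_le_of_ne (hord x y a b ha hb hxy.le) hab),
      hcontr x y a b ha hb⟩
  · intro H
    refine ⟨fun x y a ha hb => ?_, fun x y a b ha hb => ?_, fun x y a b ha hb hxy => ?_⟩
    · by_contra hxy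
      rcases lt_or_gt_of_ne hxy with h | h
      · exact (H x y a a ha hb h).1.false
      · exact (H y x a a hb ha h).1.false
    · rcases lt_trichotomy x y with h | rfl | h
      · exact ((step_mk_iff h).1 (H x y a b ha hb h)).2
      · simp_all
      · rw [abs_sub_comm (a : ℤ), abs_sub_comm (x : ℤ)]
        exact ((step_mk_iff h).1 (H y x b a hb ha h)).2
    · rcases hxy.lt_or_eq with h | rfl
      · exact (H x y a b ha hb h).1.le
      · simp_all

theorem isOCI_iff_isChain_graph (f : Fin n → Option (Fin n)) :
    PInj f ∧ Contr f ∧ OrdPres f ↔ IsChain Step (graph f : Set (ℕ × ℕ)) := by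
  rw [isOCI_iff_forall_step]
  constructor
  · rintro H _ hp _ hq hne
    obtain ⟨x, a, ha, rfl⟩ := mem_graph.1 hp
    obtain ⟨y, b, hb, rfl⟩ := mem_graph.1 hq
    rcases lt_trichotomy x y with h | rfl | h
    · exact .inl (H x y a b ha hb h)
    · simp_all
    · exact .inr (H y x b a hb ha h)
  · intro hc x y a b ha hb hxy
    refine (hc (mk_mem_graph.2 ha) (mk_mem_graph.2 hb) fun h =>
      hxy.ne (Fin.ext (congrArg Prod.fst h))).resolve_right fun h => ?_
    exact hxy.not_gt h.fst_lt

theorem exists_graph_eq {S : Finset (ℕ × ℕ)} (hS : S ⊆ range n ×ˢ range n)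
    (hc : IsChain Step (S : Set (ℕ × ℕ))) : ∃ f : Fin n → Option (Fin n), graph f = S := by
  classical
  refine ⟨fun x => if h : ∃ a : Fin n, ((x : ℕ), (a : ℕ)) ∈ S then some h.choose else none, ?_⟩
  ext p
  constructor
  · intro hp
    obtain ⟨x, a, hxa, rfl⟩ := mem_graph.1 hp
    split_ifs at hxa with h
    cases hxa
    exact h.choose_spec
  · obtain ⟨x, a⟩ := p
    intro hp
    have hb := mem_product.1 (hS hp)
    lift x to Fin n using mem_range.1 hb.1
    lift a to Fin n using mem_range.1 hb.2
    have h : ∃ a : Fin n, ((x : ℕ), (a : ℕ)) ∈ S := ⟨a, hp⟩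
    refine mk_mem_graph.2 (dif_pos h ▸ congrArg some (Fin.ext ?_))
    exact congrArg Prod.snd (eq_of_fst_eq_of_isChain hc h.choose_spec hp rfl)

theorem card_isOCI_eq_numChainsBox (n : ℕ) :
    Nat.card {f : Fin n → Option (Fin n) // PInj f ∧ Contr f ∧ OrdPres f} = numChainsBox n := by
  rw [numChainsBox, ← Nat.card_eq_finsetCard]
  refine Nat.card_eq_of_bijective (fun f => ⟨graph f.1, mem_chainsIn.2
    ⟨graph_subset f.1, (isOCI_iff_isChain_graph f.1).1 f.2⟩⟩) ⟨fun f g h => ?_, fun S => ?_⟩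
  · exact Subtype.ext (graph_injective (congrArg Subtype.val h))
  · obtain ⟨hSR, hS⟩ := mem_chainsIn.1 S.2
    obtain ⟨f, hf⟩ := exists_graph_eq hSR hS
    exact ⟨⟨f, (isOCI_iff_isChain_graph f).2 (hf ▸ hS)⟩, Subtype.ext hf⟩

end Graph

section Recurrences

local notation "N" => numChainsBelow

lemma numChainsBelow_zero_right (d : ℕ) : N (d, 0) = 1 := by
  rw [numChainsBelow_eq]
  simp [preds]

lemma preds_succ_snd {d e : ℕ} (h : d ≤ e) :
    preds (d, e + 1) = (preds (d, e)).map (translate (0, 1)).toEmbedding := by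
  ext ⟨x, a⟩
  simp only [mem_preds, mem_map, RelEmbedding.coe_toEmbedding, translate_apply, Prod.exists,
    Prod.mk_add_mk, Prod.mk.injEq, Step, add_zero]
  constructor
  · intro h
    exact ⟨x, a - 1, by omega, rfl, by omega⟩
  · rintro ⟨y, b, hs, rfl, rfl⟩
    omega

lemma numChainsBelow_succ_snd {d e : ℕ} (h : d ≤ e) : N (d, e + 1) = N (d, e) := by
  rw [numChainsBelow, preds_succ_snd h, card_chainsIn_map, numChainsBelow]

lemma numChainsBelow_of_le {d e : ℕ} (h : d ≤ e) : N (d, e) = N (d, d) := by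
  induction e, h using Nat.le_induction with
  | base => rfl
  | succ e h ih => rw [numChainsBelow_succ_snd h, ih]

/-- The predecessors of `q` with the same value of `x - a` as `q`. -/
def diagPreds (q : ℕ × ℕ) : Finset (ℕ × ℕ) := (preds q).filter fun p => q.2 + p.1 = p.2 + q.1

lemma diagPreds_succ (d e : ℕ) :
    diagPreds (d + 1, e + 1) = insert (d, e) (diagPreds (d, e)) := by
  ext ⟨x, a⟩
  simp only [diagPreds, mem_filter, mem_preds, mem_insert, Step, Prod.mk.injEq]
  omega

lemma numChainsBelow_succ_fst (d e : ℕ) :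
    N (d + 1, e) = N (d, e) + ∑ p ∈ diagPreds (d + 1, e), N p := by
  have hoff : (preds (d + 1, e)).filter (fun p => ¬ e + p.1 = p.2 + (d + 1)) = preds (d, e) := by
    ext p
    simp only [mem_filter, mem_preds, Step]
    omega
  rw [numChainsBelow_eq (d + 1, e), numChainsBelow_eq (d, e), diagPreds,
    ← sum_filter_add_sum_filter_not (preds (d + 1, e)) (fun p => e + p.1 = p.2 + (d + 1)), hoff]
  ring

lemma numChainsBelow_pascal (d e : ℕ) :
    N (d + 2, e + 1) + N (d, e) = 2 * N (d + 1, e) + N (d + 1, e + 1) := by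
  have h₁ : N (d + 2, e + 1) = N (d + 1, e + 1) + ∑ p ∈ diagPreds (d + 2, e + 1), N p :=
    numChainsBelow_succ_fst (d + 1) (e + 1)
  have h₂ := numChainsBelow_succ_fst d e
  rw [diagPreds_succ, sum_insert (by simp [diagPreds, Step])] at h₁
  omega

lemma numChainsBelow_one_one : N (1, 1) = 2 := by
  have h := numChainsBelow_succ_fst 0 1
  rw [diagPreds_succ, sum_insert (by simp [diagPreds, Step]),
    numChainsBelow_of_le zero_le_one, numChainsBelow_zero_right] at h
  simpa [diagPreds, preds] using h

lemma numChainsBelow_diag_rec (n : ℕ) :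
    N (n + 2, n + 2) + N (n, n) = 3 * N (n + 1, n + 1) := by
  have h : N (n + 2, n + 2) + N (n, n + 1) = 2 * N (n + 1, n + 1) + N (n + 1, n + 2) :=
    numChainsBelow_pascal n (n + 1)
  rw [numChainsBelow_of_le (Nat.le_succ n), numChainsBelow_of_le (Nat.le_succ (n + 1))] at h
  omega

lemma sum_numChainsBelow_diag (n : ℕ) :
    ∑ d ∈ range (n + 1), N (d, d) + N (n, n) = N (n + 1, n + 1) := by
  induction n with
  | zero => simp [numChainsBelow_one_one, numChainsBelow_zero_right]
  | succ n ih =>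
    change ∑ d ∈ range (n + 2), N (d, d) + N (n + 1, n + 1) = N (n + 2, n + 2)
    rw [sum_range_succ]
    have := numChainsBelow_diag_rec n
    omega

lemma sum_numChainsBelow_row_rec (n : ℕ) :
    ∑ e ∈ range (n + 3), N (n + 2, e) + ∑ e ∈ range (n + 1), N (n, e) + N (n, n) =
      3 * ∑ e ∈ range (n + 2), N (n + 1, e) + N (n + 1, n + 1) := by
  have h : ∑ e ∈ range (n + 2), (N (n + 2, e + 1) + N (n, e)) =
      ∑ e ∈ range (n + 2), (2 * N (n + 1, e) + N (n + 1, e + 1)) :=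
    sum_congr rfl fun e _ => numChainsBelow_pascal n e
  rw [sum_add_distrib, sum_add_distrib, ← mul_sum] at h
  have h₁ : ∑ e ∈ range (n + 3), N (n + 2, e) =
      ∑ e ∈ range (n + 2), N (n + 2, e + 1) + N (n + 2, 0) := sum_range_succ' _ _
  have h₂ : ∑ e ∈ range (n + 2), N (n, e) =
      ∑ e ∈ range (n + 1), N (n, e) + N (n, n + 1) := sum_range_succ _ _
  have h₃ : ∑ e ∈ range (n + 3), N (n + 1, e) =
      ∑ e ∈ range (n + 2), N (n + 1, e + 1) + N (n + 1, 0) := sum_range_succ' _ _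
  have h₄ : ∑ e ∈ range (n + 3), N (n + 1, e) =
      ∑ e ∈ range (n + 2), N (n + 1, e) + N (n + 1, n + 2) := sum_range_succ _ _
  rw [numChainsBelow_of_le (Nat.le_succ n)] at h₂
  rw [numChainsBelow_of_le (Nat.le_succ (n + 1))] at h₄
  simp only [numChainsBelow_zero_right] at h₁ h₃
  omega

lemma numChainsBox_succ (n : ℕ) : numChainsBox (n + 1) =
    numChainsBox n + ∑ d ∈ range n, N (d, d) + ∑ e ∈ range (n + 1), N (n, e) := by
  have hcol : ∀ d ∈ range n,
      ∑ e ∈ range (n + 1), N (d, e) = ∑ e ∈ range n, N (d, e) + N (d, d) :=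
    fun d hd => by rw [sum_range_succ, numChainsBelow_of_le (mem_range.1 hd).le]
  rw [numChainsBox_eq, numChainsBox_eq, sum_range_succ, sum_congr rfl hcol, sum_add_distrib]
  ring

theorem numChainsBox_rec (n : ℕ) :
    numChainsBox (n + 2) + numChainsBox n = 3 * numChainsBox (n + 1) + N (n, n) := by
  induction n with
  | zero =>
    simp [numChainsBox_succ, numChainsBox_eq, sum_range_succ, numChainsBelow_zero_right,
      numChainsBelow_one_one]
  | succ n ih =>
    change numChainsBox (n + 3) + numChainsBox (n + 1) =
      3 * numChainsBox (n + 2) + N (n + 1, n + 1)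
    have h₁ := numChainsBox_succ n
    have h₂ : numChainsBox (n + 2) = numChainsBox (n + 1) + ∑ d ∈ range (n + 1), N (d, d) +
        ∑ e ∈ range (n + 2), N (n + 1, e) := numChainsBox_succ (n + 1)
    have h₃ : numChainsBox (n + 3) = numChainsBox (n + 2) + ∑ d ∈ range (n + 2), N (d, d) +
        ∑ e ∈ range (n + 3), N (n + 2, e) := numChainsBox_succ (n + 2)
    have h₄ : ∑ d ∈ range (n + 2), N (d, d) =
        ∑ d ∈ range (n + 1), N (d, d) + N (n + 1, n + 1) := sum_range_succ _ _
    have h₅ := sum_range_succ (fun d => N (d, d)) n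
    have h₆ := sum_numChainsBelow_row_rec n
    have h₇ := sum_numChainsBelow_diag n
    omega

lemma numChainsBox_initial :
    numChainsBox 0 = 1 ∧ numChainsBox 1 = 2 ∧ numChainsBox 2 = 6 ∧ numChainsBox 3 = 18 := by
  have h₀ : numChainsBox 0 = 1 := by simp [numChainsBox_eq]
  have h₁ : numChainsBox 1 = 2 := by simp [numChainsBox_eq, numChainsBelow_zero_right]
  have r₀ : numChainsBox 2 + numChainsBox 0 = 3 * numChainsBox 1 + N (0, 0) :=
    numChainsBox_rec 0
  have r₁ : numChainsBox 3 + numChainsBox 1 = 3 * numChainsBox 2 + N (1, 1) :=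
    numChainsBox_rec 1
  have d₀ := numChainsBelow_zero_right 0
  have d₁ := numChainsBelow_one_one
  omega

theorem numChainsBox_rec_four (n : ℕ) :
    numChainsBox (n + 4) + 11 * numChainsBox (n + 2) + numChainsBox n =
      6 * numChainsBox (n + 3) + 6 * numChainsBox (n + 1) := by
  have r₀ := numChainsBox_rec n
  have r₁ : numChainsBox (n + 3) + numChainsBox (n + 1) =
      3 * numChainsBox (n + 2) + N (n + 1, n + 1) := numChainsBox_rec (n + 1)
  have r₂ : numChainsBox (n + 4) + numChainsBox (n + 2) =
      3 * numChainsBox (n + 3) + N (n + 2, n + 2) := numChainsBox_rec (n + 2)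
  have := numChainsBelow_diag_rec n
  omega

end Recurrences

end OCI

open OCI

/-- The sequence `h_n = |OCI_n|` has initial values `1, 2, 6, 18` and satisfies
`h_n = 6h_{n-1} - 11h_{n-2} + 6h_{n-3} - h_{n-4}` for `n ≥ 4`. -/
theorem OCI_order_recurrence (h : ℕ → ℕ)
    (hdef : ∀ k, h k = Nat.card {f : Fin k → Option (Fin k) //
        PInj f ∧ Contr f ∧ OrdPres f}) :
    h 0 = 1 ∧ h 1 = 2 ∧ h 2 = 6 ∧ h 3 = 18 ∧
    ∀ n, 4 ≤ n →
      h n + 11 * h (n - 2) + h (n - 4) = 6 * h (n - 1) + 6 * h (n - 3) := by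
  have hbox : h = numChainsBox := funext fun k => (hdef k).trans (card_isOCI_eq_numChainsBox k)
  subst hbox
  refine ⟨numChainsBox_initial.1, numChainsBox_initial.2.1, numChainsBox_initial.2.2.1,
    numChainsBox_initial.2.2.2, fun n hn => ?_⟩
  obtain ⟨m, rfl⟩ := Nat.exists_eq_add_of_le' hn
  simpa [show m + 4 - 2 = m + 2 by omega, show m + 4 - 1 = m + 3 by omega,
    show m + 4 - 3 = m + 1 by omega] using numChainsBox_rec_four m
end

section
/- Fix n ≥ 1, p ≥ 2, m < p, and k⁻, k⁺, l⁺ ∈ X_n. The number of α ∈ ODCI_n with min(im α) = k⁻, max(im α) = k⁺, max(dom α) = l⁺, exactly m fixed points, and height h(α) = p equals C(l⁺ − k⁺ + p − m − 2, p − m − 1)·C(k⁺ − k⁻ − 1, p − 2). -/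
/-- Integer binomial coefficient, `0` whenever `b < 0` or `b > a`. -/
def ichoose (a b : ℤ) : ℕ :=
  if 0 ≤ b ∧ b ≤ a then a.toNat.choose b.toNat else 0

open Finset Function

lemma abs_sub_le_abs_sub_iff_monotone_sub {ι : Type*} [LinearOrder ι] {u v : ι → ℤ}
    (hu : Monotone u) (hv : Monotone v) :
    (∀ i j, |v i - v j| ≤ |u i - u j|) ↔ Monotone (u - v) := by
  have key : ∀ i j, i ≤ j → (|v i - v j| ≤ |u i - u j| ↔ (u - v) i ≤ (u - v) j) := by
    intro i j hij
    rw [abs_sub_comm, abs_of_nonneg (sub_nonneg.2 (hv hij)), abs_sub_comm,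
      abs_of_nonneg (sub_nonneg.2 (hu hij)), Pi.sub_apply, Pi.sub_apply]
    constructor <;> intro h <;> linarith
  refine ⟨fun h i j hij => (key i j hij).1 (h i j), fun h i j => ?_⟩
  rcases le_total i j with hij | hji
  · exact (key i j hij).2 (h hij)
  · rw [abs_sub_comm, abs_sub_comm (u i)]
    exact (key j i hji).2 (h hji)

lemma monotone_intCast_sub_iff {ι : Type*} [Preorder ι] {u v : ι → ℕ} (h : ∀ i, v i ≤ u i) :
    Monotone (fun i => (u i : ℤ) - v i) ↔ Monotone (fun i => u i - v i) := by
  simp only [Monotone, ← Nat.cast_sub (h _), Nat.cast_le]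

lemma StrictMono.add_sub_le_of_le {k : ℕ} {e : Fin k → ℕ} (he : StrictMono e) {i j : Fin k}
    (hij : i ≤ j) : e i + (j - i : ℕ) ≤ e j := by
  have h := card_le_card_of_injOn e (s := Icc i j) (t := Icc (e i) (e j))
    (fun x hx => by
      rw [coe_Icc, Set.mem_Icc] at hx ⊢
      exact ⟨he.monotone hx.1, he.monotone hx.2⟩) he.injective.injOn
  rw [Fin.card_Icc, Nat.card_Icc] at h
  have := he.monotone hij
  omega

lemma Monotone.min_image_univ {α : Type*} [LinearOrder α] {k : ℕ} {Y : Fin (k + 1) → α}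
    (hY : Monotone Y) : (univ.image Y).min = (Y 0 : WithTop α) := by
  rw [← coe_min' (univ_nonempty.image Y), min'_image hY]
  exact congrArg _ (congrArg Y (le_antisymm (min'_le _ _ (mem_univ _)) (Fin.zero_le _)))

lemma Monotone.max_image_univ {α : Type*} [LinearOrder α] {k : ℕ} {Y : Fin (k + 1) → α}
    (hY : Monotone Y) : (univ.image Y).max = (Y (Fin.last k) : WithBot α) := by
  rw [← coe_max' (univ_nonempty.image Y), max'_image hY]
  exact congrArg _ (congrArg Y (le_antisymm (Fin.le_last _) (le_max' _ _ (mem_univ _))))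

lemma Monotone.card_filter_eq_zero_eq_iff {k m : ℕ} {d : Fin k → ℕ} (hd : Monotone d)
    (hm : m ≤ k) : #{i | d i = 0} = m ↔ ∀ i : Fin k, d i = 0 ↔ (i : ℕ) < m := by
  have hdown : ∀ i j : Fin k, j ≤ i → d i = 0 → d j = 0 := fun i j hji hi =>
    Nat.eq_zero_of_le_zero (hi ▸ hd hji)
  constructor
  · rintro rfl i
    exact (Fin.lt_card_filter_univ_iff_apply_of_imp _ hdown).symm
  · intro h
    rw [filter_congr fun i _ => h i, Fin.card_filter_val_lt, min_eq_right hm]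

lemma card_fin_orderEmbedding {β : Type*} [LinearOrder β] (k : ℕ) :
    Nat.card (Fin k ↪o β) = (Nat.card β).choose k := by
  rw [Nat.card_congr Set.powersetCard.ofFinEmbEquiv, Set.powersetCard.card]

lemma ichoose_sub_one (a b q : ℕ) :
    ichoose ((b : ℤ) - a - 1) q = if a < b then (b - a - 1).choose q else 0 := by
  unfold ichoose
  split_ifs with h1 h2 h2
  · congr 1
    omega
  · omega
  · exact (Nat.choose_eq_zero_of_lt (by omega)).symm
  · rfl

namespace ODCI

section GraphMap

variable {n p : ℕ}

noncomputable def graphMap (g Y : Fin p → Fin n) : Fin n → Option (Fin n) := fun x =>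
  if h : ∃ i, g i = x then some (Y h.choose) else none

variable {g Y : Fin p → Fin n}

lemma graphMap_eq_some (hg : Injective g) {x a : Fin n} :
    graphMap g Y x = some a ↔ ∃ i, g i = x ∧ Y i = a := by
  unfold graphMap
  split_ifs with h
  · refine ⟨fun ha => ⟨_, h.choose_spec, Option.some_inj.mp ha⟩, ?_⟩
    rintro ⟨i, rfl, rfl⟩
    rw [hg h.choose_spec]
  · simp only [false_iff, not_exists, not_and]
    exact fun i hi => absurd ⟨i, hi⟩ h

lemma graphMap_apply (hg : Injective g) (i : Fin p) : graphMap g Y (g i) = some (Y i) :=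
  (graphMap_eq_some hg).2 ⟨i, rfl, rfl⟩

lemma isSome_graphMap {x : Fin n} : (graphMap g Y x).isSome ↔ ∃ i, g i = x := by
  unfold graphMap
  split_ifs with h <;> simp [h]

lemma pdom_graphMap : pdom (graphMap g Y) = univ.image g := by
  ext x
  simp [pdom, isSome_graphMap]

lemma pim_graphMap (hg : Injective g) : pim (graphMap g Y) = univ.image Y := by
  ext a
  simp [pim, graphMap_eq_some hg]

lemma pfix_graphMap (hg : Injective g) : pfix (graphMap g Y) = #{i | g i = Y i} := by
  rw [pfix, ← card_image_of_injective _ hg]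
  congr 1
  ext x
  simp only [mem_filter, mem_univ, true_and, mem_image, graphMap_eq_some hg]
  exact ⟨fun ⟨i, hi, hx⟩ => ⟨i, hi.trans hx.symm, hi⟩, fun ⟨i, hi, hx⟩ => ⟨i, hx, hx ▸ hi.symm⟩⟩

lemma pheight_graphMap (hg : Injective g) (hY : Injective Y) : pheight (graphMap g Y) = p := by
  rw [pheight, pim_graphMap hg, card_image_of_injective _ hY, card_univ, Fintype.card_fin]

lemma forall_graphMap_eq_some (hg : Injective g) {P : Fin n → Fin n → Prop} :
    (∀ x a, graphMap g Y x = some a → P x a) ↔ ∀ i, P (g i) (Y i) := by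
  refine ⟨fun h i => h _ _ (graphMap_apply hg i), fun h x a hx => ?_⟩
  obtain ⟨i, rfl, rfl⟩ := (graphMap_eq_some hg).1 hx
  exact h i

lemma forall₂_graphMap_eq_some (hg : Injective g) {P : Fin n → Fin n → Fin n → Fin n → Prop} :
    (∀ x y a b, graphMap g Y x = some a → graphMap g Y y = some b → P x y a b) ↔
      ∀ i j, P (g i) (g j) (Y i) (Y j) := by
  refine ⟨fun h i j => h _ _ _ _ (graphMap_apply hg i) (graphMap_apply hg j), ?_⟩
  intro h x y a b hx hy
  obtain ⟨i, rfl, rfl⟩ := (graphMap_eq_some hg).1 hx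
  obtain ⟨j, rfl, rfl⟩ := (graphMap_eq_some hg).1 hy
  exact h i j

lemma pInj_graphMap (hg : Injective g) (hY : Injective Y) : PInj (graphMap g Y) := by
  intro x y a hx hy
  obtain ⟨i, rfl, rfl⟩ := (graphMap_eq_some hg).1 hx
  obtain ⟨j, rfl, hj⟩ := (graphMap_eq_some hg).1 hy
  rw [hY hj]

lemma ordPres_graphMap (hg : StrictMono g) (hY : Monotone Y) : OrdPres (graphMap g Y) :=
  (forall₂_graphMap_eq_some hg.injective).2 fun _ _ hij => hY (hg.le_iff_le.1 hij)

lemma ordDecr_graphMap_iff (hg : Injective g) : OrdDecr (graphMap g Y) ↔ ∀ i, Y i ≤ g i :=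
  forall_graphMap_eq_some hg

lemma contr_graphMap_iff (hg : StrictMono g) (hY : StrictMono Y) :
    Contr (graphMap g Y) ↔ Monotone (fun i => ((g i : ℕ) : ℤ) - (Y i : ℕ)) :=
  (forall₂_graphMap_eq_some hg.injective).trans <|
    abs_sub_le_abs_sub_iff_monotone_sub (fun _ _ h => by simpa using hg.monotone h)
      (fun _ _ h => by simpa using hY.monotone h)

lemma graphMap_injective {g' Y' : Fin p → Fin n} (hg : StrictMono g) (hY : StrictMono Y)
    (hg' : StrictMono g') (hY' : StrictMono Y') (h : graphMap g Y = graphMap g' Y') :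
    g = g' ∧ Y = Y' := by
  have hdom := congrArg (fun f => (pdom f : Set (Fin n))) h
  have him := congrArg (fun f => (pim f : Set (Fin n))) h
  simp only [pdom_graphMap, pim_graphMap hg.injective, pim_graphMap hg'.injective, coe_image,
    coe_univ, Set.image_univ] at hdom him
  exact ⟨(hg.range_inj hg').1 hdom, (hY.range_inj hY').1 him⟩

lemma card_pdom_eq_card_pim {f : Fin n → Option (Fin n)} (hf : PInj f) :
    #(pdom f) = #(pim f) := by
  refine card_nbij (fun x => (f x).getD x) ?_ ?_ ?_
  · intro x hx
    obtain ⟨a, ha⟩ := Option.isSome_iff_exists.1 (by simpa [pdom] using hx)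
    simpa [pim, ha] using ⟨x, ha⟩
  · intro x hx y hy hxy
    obtain ⟨a, ha⟩ := Option.isSome_iff_exists.1 (by simpa [pdom] using hx)
    obtain ⟨b, hb⟩ := Option.isSome_iff_exists.1 (by simpa [pdom] using hy)
    simp only [ha, hb, Option.getD_some] at hxy
    exact hf x y a ha (hxy ▸ hb)
  · intro a ha
    obtain ⟨x, hx⟩ := by simpa [pim] using ha
    exact ⟨x, by simp [pdom, hx], by simp [hx]⟩

lemma exists_eq_graphMap {f : Fin n → Option (Fin n)} (hinj : PInj f) (hpres : OrdPres f)
    (hp : pheight f = p) :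
    ∃ g Y : Fin p → Fin n, StrictMono g ∧ StrictMono Y ∧ f = graphMap g Y := by
  set g := (pdom f).orderEmbOfFin ((card_pdom_eq_card_pim hinj).trans hp)
  have hsome : ∀ i, (f (g i)).isSome := fun i =>
    (mem_filter.1 ((pdom f).orderEmbOfFin_mem _ i)).2
  set Y := fun i => (f (g i)).get (hsome i)
  have hgY : ∀ i, f (g i) = some (Y i) := fun i => by simp [Y]
  have hY : StrictMono Y := fun i j hij =>
    (hpres _ _ _ _ (hgY i) (hgY j) (g.strictMono hij).le).lt_of_ne fun h =>
      (g.strictMono hij).ne (hinj _ _ _ (hgY i) (h ▸ hgY j))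
  refine ⟨g, Y, g.strictMono, hY, funext fun x => Option.ext fun a => ?_⟩
  rw [graphMap_eq_some g.injective]
  constructor
  · intro hx
    have hxg : x ∈ Set.range g := by
      rw [range_orderEmbOfFin]
      simp [pdom, hx]
    obtain ⟨i, rfl⟩ := hxg
    exact ⟨i, rfl, Option.some_inj.1 ((hgY i).symm.trans hx)⟩
  · rintro ⟨i, rfl, rfl⟩
    exact hgY i

end GraphMap

section StrictSeqs

variable {α : Type*} [LinearOrder α]

def strictSeqs (q : ℕ) (a b : α) : Set (Fin (q + 2) → α) :=
  {Y | StrictMono Y ∧ Y 0 = a ∧ Y (Fin.last (q + 1)) = b}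

variable {q : ℕ} {a b : α}

lemma strictMono_cons_snoc {e : Fin q → α} (hab : a < b) (he : StrictMono e)
    (hae : ∀ j, a < e j) (heb : ∀ j, e j < b) :
    StrictMono (Fin.cons a (Fin.snoc e b : Fin (q + 1) → α) : Fin (q + 2) → α) := by
  refine Fin.strictMono_cons.2 ⟨Fin.lastCases (by simpa) (by simpa), ?_⟩
  rw [← Fin.insertNth_last', Fin.strictMono_insertNth_iff]
  exact ⟨he, fun j _ => heb j, fun j h => absurd h (Fin.castSucc_lt_last j).not_ge⟩

lemma apply_mem_Ioo_of_mem_strictSeqs {Y : Fin (q + 2) → α} (hY : Y ∈ strictSeqs q a b)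
    (j : Fin q) : Y j.castSucc.succ ∈ Set.Ioo a b := by
  obtain ⟨hY, rfl, rfl⟩ := hY
  exact ⟨hY (Fin.succ_pos _), hY (by simp [Fin.lt_def])⟩

def strictSeqsEquiv (hab : a < b) : strictSeqs q a b ≃ (Fin q ↪o Set.Ioo a b) where
  toFun Y := OrderEmbedding.ofStrictMono
    (fun j => ⟨Y.1 j.castSucc.succ, apply_mem_Ioo_of_mem_strictSeqs Y.2 j⟩)
    fun _ _ hij => Y.2.1 (by simpa using hij)
  invFun e := ⟨Fin.cons a (Fin.snoc (fun j => (e j : α)) b),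
    strictMono_cons_snoc hab (fun _ _ h => e.strictMono h) (fun j => (e j).2.1)
      (fun j => (e j).2.2),
    rfl, by simp⟩
  left_inv Y := by
    obtain ⟨Y, hY, rfl, rfl⟩ := Y
    ext i
    induction i using Fin.cases with
    | zero => rfl
    | succ i => induction i using Fin.lastCases with
      | last => simp
      | cast j => simp; rfl
  right_inv e := by
    ext j
    simp

lemma card_strictSeqs [LocallyFiniteOrder α] :
    Nat.card (strictSeqs q a b) = if a < b then (Ioo a b).card.choose q else 0 := by
  split_ifs with hab
  · rw [Nat.card_congr (strictSeqsEquiv hab), card_fin_orderEmbedding]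
    simp
  · have : strictSeqs q a b = ∅ := by
      refine Set.eq_empty_of_forall_notMem fun Y ⟨hY, h0, hl⟩ => hab ?_
      rw [← h0, ← hl]
      exact hY Fin.last_pos
    simp [this]

lemma card_strictSeqs_nat (a b : ℕ) :
    Nat.card (strictSeqs q a b) = ichoose ((b : ℤ) - a - 1) q := by
  rw [card_strictSeqs, Nat.card_Ioo, ichoose_sub_one]

lemma card_strictSeqs_fin {n : ℕ} (a b : Fin n) :
    Nat.card (strictSeqs q a b) = ichoose (((b : ℕ) : ℤ) - (a : ℕ) - 1) q := by
  rw [card_strictSeqs, Fin.card_Ioo, ichoose_sub_one]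
  simp only [Fin.lt_def]

end StrictSeqs

section GapSeqs

/-- `d i` stands for the gap `x_i - y_i` between the `i`-th domain and image points; as
`y_{q+1} = b`, the last condition says `x_{q+1} = l`. -/
def gapSeqs (q m b l : ℕ) : Set (Fin (q + 2) → ℕ) :=
  {d | Monotone d ∧ (∀ i, d i = 0 ↔ (i : ℕ) < m) ∧ b + d (Fin.last (q + 1)) = l}

variable {q m b l : ℕ}

/-- Stars and bars: `e_0 = b + m` and `e_{j+1} = b + m + j + d_{m+j}` is strictly increasing
exactly when `0 < d_m ≤ d_{m+1} ≤ ⋯`. -/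
def gapToSeq (hm : m ≤ q + 1) (b : ℕ) (d : Fin (q + 2) → ℕ) : Fin (q + 1 - m + 2) → ℕ :=
  Fin.cons (b + m) fun j => b + d ⟨m + j, by omega⟩ + (m + j)

def seqToGap (hm : m ≤ q + 1) (b : ℕ) (e : Fin (q + 1 - m + 2) → ℕ) : Fin (q + 2) → ℕ :=
  fun i => if (i : ℕ) < m then 0 else e (Fin.succ ⟨i - m, by omega⟩) - (b + i)

lemma gapToSeq_mem (hm : m ≤ q + 1) {d : Fin (q + 2) → ℕ} (hd : d ∈ gapSeqs q m b l) :
    gapToSeq hm b d ∈ strictSeqs (q + 1 - m) (b + m) (l + q + 1) := by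
  obtain ⟨hmono, hzero, hlast⟩ := hd
  refine ⟨Fin.strictMono_cons.2 ⟨fun j => ?_, fun j j' hjj => ?_⟩, rfl, ?_⟩
  · have := (hzero ⟨m + j, by omega⟩).not.2 (by simp)
    omega
  · have hjj : (j : ℕ) < j' := hjj
    have := hmono (show (⟨m + j, by omega⟩ : Fin (q + 2)) ≤ ⟨m + j', by omega⟩ from
      Fin.mk_le_mk.2 (by omega))
    dsimp only
    omega
  · have hidx : (⟨m + (q + 1 - m), by omega⟩ : Fin (q + 2)) = Fin.last (q + 1) :=
      Fin.ext (by simp; omega)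
    rw [← Fin.succ_last, gapToSeq, Fin.cons_succ]
    simp only [Fin.val_last, hidx]
    omega

lemma seqToGap_mem (hm : m ≤ q + 1) {e : Fin (q + 1 - m + 2) → ℕ}
    (he : e ∈ strictSeqs (q + 1 - m) (b + m) (l + q + 1)) :
    seqToGap hm b e ∈ gapSeqs q m b l := by
  obtain ⟨hmono, hzero, hlast⟩ := he
  have hlow : ∀ j : Fin (q + 1 - m + 2), b + m + (j : ℕ) ≤ e j := fun j => by
    simpa [hzero] using StrictMono.add_sub_le_of_le hmono (Fin.zero_le j)
  refine ⟨fun i i' hii => ?_, fun i => ?_, ?_⟩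
  · have hii : (i : ℕ) ≤ i' := hii
    simp only [seqToGap]
    split_ifs with h h' h'
    · rfl
    · exact Nat.zero_le _
    · omega
    · have := StrictMono.add_sub_le_of_le hmono
        (show Fin.succ ⟨i - m, by omega⟩ ≤ Fin.succ ⟨i' - m, by omega⟩ from
          Fin.succ_le_succ_iff.2 (Fin.mk_le_mk.2 (by omega)))
      simp only [Fin.val_succ] at this
      omega
  · simp only [seqToGap]
    split_ifs with h
    · simp [h]
    · have := hlow (Fin.succ ⟨i - m, by omega⟩)
      simp only [Fin.val_succ] at this
      simp only [h, iff_false]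
      omega
  · have hidx : (Fin.succ ⟨q + 1 - m, by omega⟩ : Fin (q + 1 - m + 2)) = Fin.last _ := rfl
    have := hlow (Fin.last _)
    simp only [seqToGap, Fin.val_last, hidx, hlast] at this ⊢
    split_ifs <;> omega

def gapSeqsEquiv (hm : m ≤ q + 1) :
    gapSeqs q m b l ≃ strictSeqs (q + 1 - m) (b + m) (l + q + 1) where
  toFun d := ⟨gapToSeq hm b d, gapToSeq_mem hm d.2⟩
  invFun e := ⟨seqToGap hm b e, seqToGap_mem hm e.2⟩
  left_inv d := by
    obtain ⟨d, -, hzero, -⟩ := d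
    ext i
    simp only [seqToGap, gapToSeq, Fin.cons_succ]
    split_ifs with h
    · exact ((hzero i).2 h).symm
    · have hidx : (⟨m + (i - m), by omega⟩ : Fin (q + 2)) = i := Fin.ext (by simp; omega)
      simp only [hidx]
      omega
  right_inv e := by
    obtain ⟨e, hmono, hzero, -⟩ := e
    ext j
    induction j using Fin.cases with
    | zero => exact hzero.symm
    | succ j =>
      have hidx : (⟨m + j - m, by omega⟩ : Fin (q + 1 - m + 1)) = j := Fin.ext (by simp)
      have := StrictMono.add_sub_le_of_le hmono (Fin.zero_le j.succ)
      simp only [gapToSeq, seqToGap, Fin.cons_succ, hidx, hzero, Fin.val_succ, Fin.val_zero]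
        at this ⊢
      simp only [add_lt_iff_neg_left, not_lt_zero, ↓reduceIte]
      omega

lemma card_gapSeqs (hm : m ≤ q + 1) :
    Nat.card (gapSeqs q m b l) = ichoose ((l : ℤ) - b + q - m) (q + 1 - m : ℕ) := by
  rw [Nat.card_congr (gapSeqsEquiv hm), card_strictSeqs_nat]
  congr 1
  push_cast
  ring

end GapSeqs

section Count

def IsODCIWith {n : ℕ} (p m : ℕ) (a b l : Fin n) (f : Fin n → Option (Fin n)) : Prop :=
  PInj f ∧ Contr f ∧ OrdPres f ∧ OrdDecr f ∧ (pim f).min = (a : WithTop (Fin n)) ∧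
    (pim f).max = (b : WithBot (Fin n)) ∧ (pdom f).max = (l : WithBot (Fin n)) ∧
    pfix f = m ∧ pheight f = p

variable {n q m : ℕ} {a b l : Fin n}

lemma isODCIWith_graphMap_iff {g Y : Fin (q + 2) → Fin n} (hg : StrictMono g)
    (hY : StrictMono Y) (hm : m ≤ q + 2) :
    IsODCIWith (q + 2) m a b l (graphMap g Y) ↔
      Y ∈ strictSeqs q a b ∧ (∀ i, Y i ≤ g i) ∧ (fun i => (g i : ℕ) - Y i) ∈ gapSeqs q m b l := by
  simp only [IsODCIWith, pInj_graphMap hg.injective hY.injective, contr_graphMap_iff hg hY,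
    ordPres_graphMap hg hY.monotone, ordDecr_graphMap_iff hg.injective,
    pim_graphMap hg.injective, pdom_graphMap, hY.monotone.min_image_univ,
    hY.monotone.max_image_univ, hg.monotone.max_image_univ, pfix_graphMap hg.injective,
    pheight_graphMap hg.injective hY.injective, WithTop.coe_inj, WithBot.coe_inj, strictSeqs,
    gapSeqs, Set.mem_ofPred_eq, hY, true_and, and_true]
  refine ⟨fun ⟨hmono, hle, h0, hb, hl, hfix⟩ => ?_, fun ⟨⟨h0, hb⟩, hle, hmono, hzero, hl⟩ => ?_⟩
  all_goals
    have hle' : ∀ i, (Y i : ℕ) ≤ g i := hle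
    have hfix_iff : ∀ i, g i = Y i ↔ (g i : ℕ) - Y i = 0 := fun i => by
      rw [Fin.ext_iff]; have := hle' i; omega
    simp only [hfix_iff, monotone_intCast_sub_iff hle'] at *
  · refine ⟨⟨h0, hb⟩, hle, hmono, (hmono.card_filter_eq_zero_eq_iff hm).1 hfix, ?_⟩
    subst hb hl
    have := hle' (Fin.last _)
    omega
  · refine ⟨hmono, hle, h0, hb, ?_, (hmono.card_filter_eq_zero_eq_iff hm).2 hzero⟩
    subst hb
    have := hle' (Fin.last _)
    exact Fin.ext (by omega)

lemma add_le_of_mem_strictSeqs_of_mem_gapSeqs {Y : Fin (q + 2) → Fin n} {d : Fin (q + 2) → ℕ}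
    (hY : Y ∈ strictSeqs q a b) (hd : d ∈ gapSeqs q m b l) (i : Fin (q + 2)) :
    (Y i : ℕ) + d i ≤ l := by
  have hYi : Y i ≤ b := hY.2.2 ▸ hY.1.monotone (Fin.le_last i)
  have hYi : (Y i : ℕ) ≤ b := hYi
  have hdi := hd.1 (Fin.le_last i)
  have := hd.2.2
  omega

def addGap (Y : strictSeqs q a b) (d : gapSeqs q m b l) : Fin (q + 2) → Fin n :=
  fun i => ⟨Y.1 i + d.1 i, (add_le_of_mem_strictSeqs_of_mem_gapSeqs Y.2 d.2 i).trans_lt l.2⟩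

lemma strictMono_addGap (Y : strictSeqs q a b) (d : gapSeqs q m b l) :
    StrictMono (addGap Y d) :=
  fun _ _ hij => Fin.mk_lt_mk.2 (Nat.add_lt_add_of_lt_of_le (Y.2.1 hij) (d.2.1 hij.le))

lemma card_isODCIWith (hm : m ≤ q + 1) :
    Nat.card {f // IsODCIWith (q + 2) m a b l f} =
      Nat.card (strictSeqs q a b) * Nat.card (gapSeqs q m b l) := by
  rw [← Nat.card_prod]
  symm
  refine Nat.card_eq_of_bijective (fun Yd => ⟨graphMap (addGap Yd.1 Yd.2) Yd.1, ?_⟩) ⟨?_, ?_⟩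
  · refine (isODCIWith_graphMap_iff (strictMono_addGap _ _) Yd.1.2.1 (by omega)).2
      ⟨Yd.1.2, fun i => Fin.mk_le_mk.2 (Nat.le_add_right _ _), ?_⟩
    simp [addGap, Yd.2.2]
  · rintro ⟨Y, d⟩ ⟨Y', d'⟩ h
    obtain ⟨hX, hY⟩ := graphMap_injective (strictMono_addGap Y d) Y.2.1
      (strictMono_addGap Y' d') Y'.2.1 (congrArg Subtype.val h)
    obtain rfl : Y = Y' := Subtype.ext hY
    refine Prod.ext rfl (Subtype.ext (funext fun i => ?_))
    simpa [addGap] using congrArg Fin.val (congrFun hX i)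
  · rintro ⟨f, hf⟩
    obtain ⟨g, Y, hg, hY, rfl⟩ := exists_eq_graphMap hf.1 hf.2.2.1 hf.2.2.2.2.2.2.2.2
    obtain ⟨hYs, hle, hds⟩ := (isODCIWith_graphMap_iff hg hY (by omega)).1 hf
    refine ⟨(⟨Y, hYs⟩, ⟨_, hds⟩), Subtype.ext (congrArg (graphMap · Y) (funext fun i => ?_))⟩
    have : (Y i : ℕ) ≤ g i := hle i
    exact Fin.ext (by simp only [addGap]; omega)

end Count

end ODCI

theorem ODCI_count_waists_shoulder_fix_general (n p m : ℕ) (hp : 2 ≤ p)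
    (hm : m < p) (kminus kplus lplus : Fin n) :
    Nat.card {f : Fin n → Option (Fin n) //
        PInj f ∧ Contr f ∧ OrdPres f ∧ OrdDecr f ∧
        (pim f).min = (kminus : WithTop (Fin n)) ∧
        (pim f).max = (kplus : WithBot (Fin n)) ∧
        (pdom f).max = (lplus : WithBot (Fin n)) ∧
        pfix f = m ∧ pheight f = p} =
      ichoose ((lplus.val : ℤ) - (kplus.val : ℤ) + (p : ℤ) - (m : ℤ) - 2)
          ((p : ℤ) - (m : ℤ) - 1) *
      ichoose ((kplus.val : ℤ) - (kminus.val : ℤ) - 1) ((p : ℤ) - 2) := by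
  obtain ⟨q, rfl⟩ := Nat.exists_eq_add_of_le' hp
  change Nat.card {f // ODCI.IsODCIWith (q + 2) m kminus kplus lplus f} = _
  rw [ODCI.card_isODCIWith (by omega), ODCI.card_strictSeqs_fin,
    ODCI.card_gapSeqs (by omega), mul_comm]
  congr 2 <;> push_cast [Nat.cast_sub (show m ≤ q + 1 by omega)] <;> ring

/-- The number of elements of `ODCI_n` with prescribed left waist `k⁻`, right waist
`k⁺`, right shoulder `l⁺`, exactly `m < p` fixed points and height `p ≥ 2` equals
`C(l⁺-k⁺+p-m-2, p-m-1)·C(k⁺-k⁻-1, p-2)`. -/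
theorem ODCI_count_waists_shoulder_fix (n p m : ℕ) (hn : 1 ≤ n) (hp : 2 ≤ p)
    (hm : m < p) (kminus kplus lplus : Fin n) :
    Nat.card {f : Fin n → Option (Fin n) //
        PInj f ∧ Contr f ∧ OrdPres f ∧ OrdDecr f ∧
        (pim f).min = (kminus : WithTop (Fin n)) ∧
        (pim f).max = (kplus : WithBot (Fin n)) ∧
        (pdom f).max = (lplus : WithBot (Fin n)) ∧
        pfix f = m ∧ pheight f = p} =
      ichoose ((lplus.val : ℤ) - (kplus.val : ℤ) + (p : ℤ) - (m : ℤ) - 2)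
          ((p : ℤ) - (m : ℤ) - 1) *
      ichoose ((kplus.val : ℤ) - (kminus.val : ℤ) - 1) ((p : ℤ) - 2) :=
  ODCI_count_waists_shoulder_fix_general n p m hp hm kminus kplus lplus
end
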